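/- arXiv:1108.3769 — 5 statements merged into one kernel-verified Lean document; each statement's English description precedes it below -/
import Mathlib

section
/- Let E be a finite-dimensional real inner product space, R a root system in E with set of positive roots R⁺, and κ : R → ℂ a multiplicity function. For every smooth (C^∞) function f : E → ℂ, all ξ, η ∈ E, and every x ∈ P = E ∖ ⋃_{α∈R} H_α, the Dunkl operators commute: T_{ξ,κ}(T_{η,κ} f)(x) = T_{η,κ}(T_{ξ,κ} f)(x), where T_{η,κ} f is regarded as a smooth function on the G-invariant open set P and T_{ξ,κ} is applied to it by the same formula (this makes sense since σ_α maps P to P for every α ∈ R). -/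
/-!
Sum over all of `R` with weight `1/2` and write `T_ξ = ∂_ξ + ½ ∑_α κ_α ⟨α, ξ⟩ Δ_α` with the
divided difference `Δ_α f (x) = (f x - f (σ_α x)) / ⟨α, x⟩`. The commutator `∂_ξ Δ_α - Δ_α ∂_ξ`
is `⟨α, ξ⟩` times an operator independent of `ξ`, and `∂_ξ ∂_η f` is symmetric, so
`[T_ξ, T_η] f (x) = ¼ ∑_{α,β} κ_α κ_β (α ∧ β)(ξ, η) Δ_α Δ_β f (x)`. Reindexing the inner sum by
`β ↦ σ_α β` writes this through `f x`, `f (σ_α x)`, `f (σ_β x)` and `f (σ_α σ_β x)`, with the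
antisymmetric weight `(α ∧ β)(ξ, η) / (⟨α, x⟩ ⟨β, x⟩)`; the first three terms cancel by
antisymmetry. For the last one, let `z` be the orthogonal projection of `x` onto `span {α, β}`:
a partial fraction decomposition splits the weight into a part attached to `(α, β)` and a part
attached to `(β, σ_β α)`, and the bijection `(α, β) ↦ (β, σ_β α)` of `R × R` preserves
`κ_α κ_β`, `z` and `σ_α σ_β`, so the two resulting sums cancel.
-/

noncomputable section

variable {E : Type*} [NormedAddCommGroup E] [InnerProductSpace ℝ E]

/-- The orthogonal reflection `σ_α` in the hyperplane `H_α` orthogonal to `α`. -/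
def reflect (α x : E) : E := x - ((2 * (inner ℝ α x : ℝ)) / ‖α‖ ^ 2) • α

/-- `R` is a root system in `E`. -/
structure IsRootSystem (R : Finset E) : Prop where
  nonzero : ∀ α ∈ R, α ≠ 0
  neg_mem : ∀ α ∈ R, -α ∈ R
  smul_mem : ∀ α ∈ R, ∀ r : ℝ, r • α ∈ R → r = 1 ∨ r = -1
  reflect_eq : ∀ α ∈ R, reflect α '' (R : Set E) = (R : Set E)
  norm_sq : ∀ α ∈ R, ‖α‖ ^ 2 = 2

/-- The Coxeter group `G = G(R)`. -/
def coxeterGroup (R : Finset E) : Subgroup (E ≃ₗᵢ[ℝ] E) :=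
  Subgroup.closure {g | ∃ α ∈ R, ⇑g = reflect α}

/-- `Rp` is a set of positive roots for `R`. -/
def IsPositiveSystem (R Rp : Finset E) : Prop :=
  (∀ α : E, α ∈ R ↔ (α ∈ Rp ∨ -α ∈ Rp)) ∧ ∀ α ∈ Rp, -α ∉ Rp

/-- The Dunkl operator `T_{ξ,κ}`. -/
def dunkl (Rp : Finset E) (κ : E → ℂ) (ξ : E) (f : E → ℂ) (x : E) : ℂ :=
  fderiv ℝ f x ξ +
    ∑ α ∈ Rp, κ α * (((inner ℝ α ξ : ℝ) / (inner ℝ α x : ℝ) : ℝ) : ℂ) * (f x - f (reflect α x))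

open RealInnerProductSpace Submodule

section Reflection

variable {α β : E}

lemma coe_reflection_orthogonal_span_singleton (α : E) :
    ⇑(reflection (ℝ ∙ α)ᗮ) = reflect α := by
  ext x
  rw [reflection_orthogonal_apply, reflection_singleton_apply, reflect]
  simp only [RCLike.ofReal_real_eq_id, id]
  module

lemma reflect_reflect (α x : E) : reflect α (reflect α x) = x := by
  simp only [← coe_reflection_orthogonal_span_singleton, reflection_reflection]

lemma inner_reflect_reflect (α u v : E) : ⟪reflect α u, reflect α v⟫ = ⟪u, v⟫ := by
  simp only [← coe_reflection_orthogonal_span_singleton, LinearIsometryEquiv.inner_map_map]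

lemma reflect_add_smul (α x ξ : E) (t : ℝ) :
    reflect α (x + t • ξ) = reflect α x + t • reflect α ξ := by
  simp only [← coe_reflection_orthogonal_span_singleton, map_add, map_smul]

lemma reflect_self (α : E) : reflect α α = -α := by
  rw [← coe_reflection_orthogonal_span_singleton,
    reflection_orthogonalComplement_singleton_eq_neg]

lemma reflect_neg_left (α x : E) : reflect (-α) x = reflect α x := by
  simp only [reflect, inner_neg_left, norm_neg, smul_neg, mul_neg, neg_div, neg_smul, neg_neg]

lemma reflect_of_norm_sq_eq_two (hα : ‖α‖ ^ 2 = 2) (x : E) : reflect α x = x - ⟪α, x⟫ • α := by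
  rw [reflect, hα, mul_div_cancel_left₀ _ two_ne_zero]

lemma reflect_reflect_eq_conj (hβ : ‖β‖ ^ 2 = 2) (y : E) :
    reflect (reflect α β) y = reflect α (reflect β (reflect α y)) := by
  have hσβ : ‖reflect α β‖ ^ 2 = 2 := by
    rw [← real_inner_self_eq_norm_sq, inner_reflect_reflect, real_inner_self_eq_norm_sq, hβ]
  have hinner : ⟪reflect α β, y⟫ = ⟪β, reflect α y⟫ := by
    rw [← inner_reflect_reflect α, reflect_reflect]
  rw [reflect_of_norm_sq_eq_two hσβ, reflect_of_norm_sq_eq_two hβ, hinner]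
  simp only [← coe_reflection_orthogonal_span_singleton, map_sub, map_smul,
    reflection_reflection]

lemma span_pair_reflect (hβ : ‖β‖ ^ 2 = 2) : span ℝ {β, reflect β α} = span ℝ {α, β} := by
  rw [reflect_of_norm_sq_eq_two hβ]
  apply le_antisymm <;>
    simp only [span_le, Set.insert_subset_iff, Set.singleton_subset_iff, SetLike.mem_coe,
      mem_span_pair]
  · exact ⟨⟨0, 1, by module⟩, ⟨1, -⟪β, α⟫, by module⟩⟩
  · exact ⟨⟨⟪β, α⟫, 1, by module⟩, ⟨1, 0, by module⟩⟩

end Reflection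

namespace IsRootSystem

variable {R : Finset E} {α β : E}

lemma reflect_mem (hR : IsRootSystem R) (hα : α ∈ R) (hβ : β ∈ R) : reflect α β ∈ R := by
  have := hR.reflect_eq α hα ▸ Set.mem_image_of_mem (reflect α) (Finset.mem_coe.mpr hβ)
  exact_mod_cast this

lemma sum_comp_reflect (hR : IsRootSystem R) {M : Type*} [AddCommMonoid M] (hα : α ∈ R)
    (g : E → M) : ∑ β ∈ R, g (reflect α β) = ∑ β ∈ R, g β :=
  Finset.sum_nbij' (reflect α) (reflect α) (fun _ hβ => hR.reflect_mem hα hβ)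
    (fun _ hβ => hR.reflect_mem hα hβ) (fun β _ => reflect_reflect α β)
    (fun β _ => reflect_reflect α β) (fun _ _ => rfl)

end IsRootSystem

section Multiplicity

variable {R : Finset E} {κ : E → ℂ} {α β : E}

lemma apply_reflect_of_coxeterGroup_invariant
    (hκ : ∀ u ∈ coxeterGroup R, ∀ α ∈ R, κ (u α) = κ α) (hα : α ∈ R) (hβ : β ∈ R) :
    κ (reflect α β) = κ β := by
  have hσ : reflection (ℝ ∙ α)ᗮ ∈ coxeterGroup R :=
    Subgroup.subset_closure ⟨α, hα, coe_reflection_orthogonal_span_singleton α⟩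
  simpa only [coe_reflection_orthogonal_span_singleton] using hκ _ hσ β hβ

lemma apply_neg_of_coxeterGroup_invariant
    (hκ : ∀ u ∈ coxeterGroup R, ∀ α ∈ R, κ (u α) = κ α) (hα : α ∈ R) : κ (-α) = κ α := by
  simpa only [reflect_self] using apply_reflect_of_coxeterGroup_invariant hκ hα hα

end Multiplicity

omit [InnerProductSpace ℝ E] in
lemma IsPositiveSystem.sum_eq_sum_add_neg {R Rp : Finset E} (hRp : IsPositiveSystem R Rp)
    {M : Type*} [AddCommMonoid M] (g : E → M) :
    ∑ α ∈ R, g α = ∑ α ∈ Rp, (g α + g (-α)) := by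
  have hdisj : Disjoint Rp (Rp.map (Equiv.neg E).toEmbedding) := by
    simp only [Finset.disjoint_left, Finset.mem_map_equiv, Equiv.neg_symm, Equiv.neg_apply]
    exact hRp.2
  have hR : R = Rp.disjUnion (Rp.map (Equiv.neg E).toEmbedding) hdisj := by
    ext α
    simp [hRp.1 α]
  rw [hR, Finset.sum_disjUnion, Finset.sum_map, Finset.sum_add_distrib]
  rfl

def divDiff (α : E) (f : E → ℂ) (x : E) : ℂ := (f x - f (reflect α x)) / ⟪α, x⟫

section DivDiff

variable {α β x : E} {f : E → ℂ}

lemma divDiff_neg_left (α : E) (f : E → ℂ) (x : E) : divDiff (-α) f x = -divDiff α f x := by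
  simp only [divDiff, reflect_neg_left, inner_neg_left, Complex.ofReal_neg, div_neg]

lemma divDiff_reflect_reflect (hβ : ‖β‖ ^ 2 = 2) (f : E → ℂ) (x : E) :
    divDiff (reflect α β) f (reflect α x) = divDiff β (fun y => f (reflect α y)) x := by
  simp only [divDiff, inner_reflect_reflect, reflect_reflect_eq_conj hβ, reflect_reflect]

lemma hasLineDerivAt_divDiff (hα : ‖α‖ ^ 2 = 2) (hf : Differentiable ℝ f) (hx : ⟪α, x⟫ ≠ 0)
    (ξ : E) :
    HasLineDerivAt ℝ (divDiff α f)
      (divDiff α (fun y => fderiv ℝ f y ξ) x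
        + ⟪α, ξ⟫ * (fderiv ℝ f (reflect α x) α - divDiff α f x) / ⟪α, x⟫) x ξ := by
  have hnum : HasDerivAt (fun t : ℝ => f (x + t • ξ) - f (reflect α x + t • reflect α ξ))
      (fderiv ℝ f x ξ - fderiv ℝ f (reflect α x) (reflect α ξ)) 0 :=
    ((hf x).hasFDerivAt.hasLineDerivAt ξ).sub
      ((hf (reflect α x)).hasFDerivAt.hasLineDerivAt (reflect α ξ))
  have hden : HasDerivAt (fun t : ℝ => ((⟪α, x + t • ξ⟫ : ℝ) : ℂ)) (⟪α, ξ⟫ : ℂ) 0 :=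
    ((innerSL ℝ α).hasFDerivAt.hasLineDerivAt ξ).ofReal_comp
  have hx' : ((⟪α, x⟫ : ℝ) : ℂ) ≠ 0 := by exact_mod_cast hx
  have hline : (fun t : ℝ => divDiff α f (x + t • ξ))
      = fun t => (f (x + t • ξ) - f (reflect α x + t • reflect α ξ)) / ⟪α, x + t • ξ⟫ := by
    funext t
    rw [divDiff, reflect_add_smul]
  rw [HasLineDerivAt, hline]
  refine (hnum.fun_div hden (by simpa using hx')).congr_deriv ?_
  rw [zero_smul, add_zero, zero_smul, add_zero, reflect_of_norm_sq_eq_two hα ξ, map_sub,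
    map_smul, divDiff, divDiff, Complex.real_smul]
  field_simp
  ring

lemma differentiableAt_divDiff (hf : Differentiable ℝ f) (hx : ⟪α, x⟫ ≠ 0) :
    DifferentiableAt ℝ (divDiff α f) x := by
  have hσ : Differentiable ℝ (reflect α) := by
    simpa only [coe_reflection_orthogonal_span_singleton]
      using (reflection (ℝ ∙ α)ᗮ).differentiable
  have hinner : DifferentiableAt ℝ (fun y : E => ((⟪α, y⟫ : ℝ) : ℂ)) x :=
    (Complex.ofRealCLM.comp (innerSL ℝ α)).differentiableAt
  exact ((hf x).sub ((hf _).comp x (hσ x))).mul (hinner.inv (by exact_mod_cast hx))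

lemma fderiv_divDiff_apply (hα : ‖α‖ ^ 2 = 2) (hf : Differentiable ℝ f) (hx : ⟪α, x⟫ ≠ 0)
    (ξ : E) :
    fderiv ℝ (divDiff α f) x ξ = divDiff α (fun y => fderiv ℝ f y ξ) x
        + ⟪α, ξ⟫ * (fderiv ℝ f (reflect α x) α - divDiff α f x) / ⟪α, x⟫ :=
  ((differentiableAt_divDiff hf hx).hasFDerivAt.hasLineDerivAt ξ).unique
    (hasLineDerivAt_divDiff hα hf hx ξ)

end DivDiff

def dunklSym (R : Finset E) (κ : E → ℂ) (ξ : E) (f : E → ℂ) (x : E) : ℂ :=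
  fderiv ℝ f x ξ + 2⁻¹ * ∑ α ∈ R, κ α * ⟪α, ξ⟫ * divDiff α f x

section DunklSym

variable {R : Finset E} {κ : E → ℂ} {f : E → ℂ} {x : E}

lemma dunkl_eq_dunklSym {Rp : Finset E} (hRp : IsPositiveSystem R Rp)
    (hκ : ∀ α ∈ Rp, κ (-α) = κ α) (ξ : E) (f : E → ℂ) : dunkl Rp κ ξ f = dunklSym R κ ξ f := by
  ext x
  rw [dunkl, dunklSym, hRp.sum_eq_sum_add_neg, Finset.mul_sum]
  congr 1
  refine Finset.sum_congr rfl fun α hα => ?_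
  rw [hκ α hα, inner_neg_left, divDiff_neg_left, divDiff]
  push_cast
  ring

lemma divDiff_dunklSym (α η : E) :
    divDiff α (dunklSym R κ η f) x = divDiff α (fun y => fderiv ℝ f y η) x
      + 2⁻¹ * ∑ β ∈ R, κ β * ⟪β, η⟫ * divDiff α (divDiff β f) x := by
  simp only [divDiff, dunklSym, add_sub_add_comm, ← mul_sub, ← Finset.sum_sub_distrib, add_div,
    mul_div_assoc, Finset.sum_div]

lemma fderiv_dunklSym_apply (hR : ∀ α ∈ R, ‖α‖ ^ 2 = 2) (hf : ContDiff ℝ 2 f)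
    (hx : ∀ α ∈ R, ⟪α, x⟫ ≠ 0) (ξ η : E) :
    fderiv ℝ (dunklSym R κ η f) x ξ = fderiv ℝ (fderiv ℝ f) x ξ η
      + 2⁻¹ * ∑ α ∈ R, κ α * ⟪α, η⟫ * (divDiff α (fun y => fderiv ℝ f y ξ) x
        + ⟪α, ξ⟫ * (fderiv ℝ f (reflect α x) α - divDiff α f x) / ⟪α, x⟫) := by
  have hf1 : Differentiable ℝ f := hf.differentiable (by norm_num)
  have hdf : DifferentiableAt ℝ (fderiv ℝ f) x :=
    (hf.fderiv_right (m := 1) (by norm_num)).differentiable (by norm_num) x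
  have hterm : ∀ α ∈ R, HasFDerivAt (fun y => κ α * ⟪α, η⟫ * divDiff α f y)
      ((κ α * ⟪α, η⟫) • fderiv ℝ (divDiff α f) x) x :=
    fun α hα => (differentiableAt_divDiff hf1 (hx α hα)).hasFDerivAt.const_mul _
  have h := (hdf.hasFDerivAt.clm_apply (hasFDerivAt_const η x)).fun_add
    ((HasFDerivAt.fun_sum hterm).const_mul (2⁻¹ : ℂ))
  unfold dunklSym
  rw [h.fderiv]
  simp only [ContinuousLinearMap.comp_zero, zero_add, add_apply, ContinuousLinearMap.flip_apply,
    smul_apply, sum_apply, smul_eq_mul]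
  congr 2
  refine Finset.sum_congr rfl fun α hα => ?_
  rw [fderiv_divDiff_apply (hR α hα) hf1 (hx α hα)]

lemma dunklSym_dunklSym (hR : ∀ α ∈ R, ‖α‖ ^ 2 = 2) (hf : ContDiff ℝ 2 f)
    (hx : ∀ α ∈ R, ⟪α, x⟫ ≠ 0) (ξ η : E) :
    dunklSym R κ ξ (dunklSym R κ η f) x = fderiv ℝ (fderiv ℝ f) x ξ η
      + 2⁻¹ * (∑ α ∈ R, κ α * ⟪α, η⟫ * divDiff α (fun y => fderiv ℝ f y ξ) x
        + ∑ α ∈ R, κ α * ⟪α, ξ⟫ * divDiff α (fun y => fderiv ℝ f y η) x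
        + ∑ α ∈ R, κ α * (⟪α, ξ⟫ * ⟪α, η⟫)
            * ((fderiv ℝ f (reflect α x) α - divDiff α f x) / ⟪α, x⟫))
      + 4⁻¹ * ∑ α ∈ R, ∑ β ∈ R, κ α * κ β * ⟪α, ξ⟫ * ⟪β, η⟫ * divDiff α (divDiff β f) x := by
  rw [dunklSym, fderiv_dunklSym_apply hR hf hx]
  simp only [divDiff_dunklSym, mul_add, Finset.sum_add_distrib]
  have hmixed : ∑ α ∈ R, κ α * ⟪α, η⟫
        * (⟪α, ξ⟫ * (fderiv ℝ f (reflect α x) α - divDiff α f x) / ⟪α, x⟫)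
      = ∑ α ∈ R, κ α * (⟪α, ξ⟫ * ⟪α, η⟫)
          * ((fderiv ℝ f (reflect α x) α - divDiff α f x) / ⟪α, x⟫) :=
    Finset.sum_congr rfl fun α _ => by ring
  have hdouble : ∑ α ∈ R, κ α * ⟪α, ξ⟫
        * (2⁻¹ * ∑ β ∈ R, κ β * ⟪β, η⟫ * divDiff α (divDiff β f) x)
      = 2⁻¹ * ∑ α ∈ R, ∑ β ∈ R, κ α * κ β * ⟪α, ξ⟫ * ⟪β, η⟫ * divDiff α (divDiff β f) x := by
    simp only [Finset.mul_sum]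
    exact Finset.sum_congr rfl fun α _ => Finset.sum_congr rfl fun β _ => by ring
  rw [hmixed, hdouble]
  ring

end DunklSym

/-- `wedge ξ η u v = (u ∧ v)(ξ, η)`. -/
def wedge (ξ η u v : E) : ℝ := ⟪u, ξ⟫ * ⟪v, η⟫ - ⟪u, η⟫ * ⟪v, ξ⟫

section Wedge

variable {ξ η α β z : E}

lemma wedge_swap (ξ η u v : E) : wedge ξ η v u = -wedge ξ η u v := by
  unfold wedge
  ring

lemma wedge_reflect_right (hα : ‖α‖ ^ 2 = 2) (ξ η β : E) :
    wedge ξ η α (reflect α β) = wedge ξ η α β := by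
  simp only [wedge, reflect_of_norm_sq_eq_two hα, inner_sub_left, real_inner_smul_left]
  ring

lemma wedge_div_eq_of_mem_span_pair (hz : z ∈ span ℝ {α, β}) (hα : ⟪α, z⟫ ≠ 0)
    (hβ : ⟪β, z⟫ ≠ 0) :
    wedge ξ η α β / (⟪α, z⟫ * ⟪β, z⟫)
      = (wedge ξ η α z / ⟪α, z⟫ - wedge ξ η β z / ⟪β, z⟫) / ⟪z, z⟫ := by
  have hz0 : ⟪z, z⟫ ≠ 0 := by
    rintro h
    rw [inner_self_eq_zero.mp h, inner_zero_right] at hα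
    exact hα rfl
  obtain ⟨a, b, rfl⟩ := mem_span_pair.mp hz
  have hαz : wedge ξ η α (a • α + b • β) = b * wedge ξ η α β := by
    simp only [wedge, inner_add_left, real_inner_smul_left]
    ring
  have hβz : wedge ξ η β (a • α + b • β) = -a * wedge ξ η α β := by
    simp only [wedge, inner_add_left, real_inner_smul_left]
    ring
  have hzz : ⟪a • α + b • β, a • α + b • β⟫
      = a * ⟪α, a • α + b • β⟫ + b * ⟪β, a • α + b • β⟫ := by
    rw [inner_add_left, real_inner_smul_left, real_inner_smul_left]
  rw [hzz] at hz0 ⊢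
  rw [hαz, hβz]
  generalize ⟪α, a • α + b • β⟫ = p at *
  generalize ⟪β, a • α + b • β⟫ = q at *
  rw [div_sub_div _ _ hα hβ, div_div, div_eq_div_iff (mul_ne_zero hα hβ)
    (mul_ne_zero (mul_ne_zero hα hβ) hz0)]
  ring

end Wedge

lemma inner_starProjection_of_mem {K : Submodule ℝ E} [K.HasOrthogonalProjection] {w : E}
    (hw : w ∈ K) (x : E) : ⟪w, K.starProjection x⟫ = ⟪w, x⟫ := by
  rw [← inner_starProjection_left_eq_right, starProjection_eq_self_iff.mpr hw]

lemma Finset.sum_sum_antisymm_mul_symm_eq_zero {ι A : Type*} [CommRing A] [NoZeroDivisors A]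
    [CharZero A] (s : Finset ι) {w g : ι → ι → A} (hw : ∀ i j, w j i = -w i j)
    (hg : ∀ i j, g j i = g i j) : ∑ i ∈ s, ∑ j ∈ s, w i j * g i j = 0 := by
  refine self_eq_neg.mp ?_
  calc ∑ i ∈ s, ∑ j ∈ s, w i j * g i j = ∑ i ∈ s, ∑ j ∈ s, w j i * g j i := Finset.sum_comm
    _ = ∑ i ∈ s, ∑ j ∈ s, -(w i j * g i j) :=
      Finset.sum_congr rfl fun i _ => Finset.sum_congr rfl fun j _ => by rw [hw, hg, neg_mul]
    _ = -∑ i ∈ s, ∑ j ∈ s, w i j * g i j := by simp only [Finset.sum_neg_distrib]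

namespace IsRootSystem

variable {R : Finset E} {κ : E → ℂ} {x : E}

lemma sum_sum_wedge_mul_apply_reflect_reflect (hR : IsRootSystem R)
    (hκ : ∀ α ∈ R, ∀ β ∈ R, κ (reflect α β) = κ β) (hx : ∀ α ∈ R, ⟪α, x⟫ ≠ 0) (g : E → ℂ)
    (ξ η : E) :
    ∑ α ∈ R, ∑ β ∈ R, κ α * κ β * ((wedge ξ η α β / (⟪α, x⟫ * ⟪β, x⟫) : ℝ) : ℂ)
      * g (reflect α (reflect β x)) = 0 := by
  have (α β : E) : FiniteDimensional ℝ (span ℝ {α, β}) :=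
    FiniteDimensional.span_of_finite ℝ (Set.toFinite _)
  let z (α β : E) : E := (span ℝ {α, β}).starProjection x
  let φ (α β : E) : ℂ := κ α * κ β * ((wedge ξ η α (z α β) / (⟪α, x⟫ * ⟪z α β, z α β⟫) : ℝ) : ℂ)
      * g (reflect α (reflect β x))
  -- `(α, β) ↦ (β, σ_β α)` fixes the plane `span {α, β}`, hence `z`, as well as `σ_α σ_β`.
  have hsplit : ∀ α ∈ R, ∀ β ∈ R,
      κ α * κ β * ((wedge ξ η α β / (⟪α, x⟫ * ⟪β, x⟫) : ℝ) : ℂ) * g (reflect α (reflect β x))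
        = φ α β - φ β (reflect β α) := by
    intro α hα β hβ
    have hαz : ⟪α, z α β⟫ = ⟪α, x⟫ := inner_starProjection_of_mem (subset_span (by simp)) x
    have hβz : ⟪β, z α β⟫ = ⟪β, x⟫ := inner_starProjection_of_mem (subset_span (by simp)) x
    have hz : z β (reflect β α) = z α β := by simp only [z, span_pair_reflect (hR.norm_sq β hβ)]
    have hpf := wedge_div_eq_of_mem_span_pair (ξ := ξ) (η := η)
      (starProjection_apply_mem _ x) (hαz ▸ hx α hα) (hβz ▸ hx β hβ)
    rw [hαz, hβz] at hpf
    simp only [φ, hz, hκ β hβ α hα, reflect_reflect_eq_conj (hR.norm_sq α hα), reflect_reflect,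
      hpf]
    push_cast
    ring
  have hperm : ∑ α ∈ R, ∑ β ∈ R, φ β (reflect β α) = ∑ α ∈ R, ∑ β ∈ R, φ α β := by
    rw [Finset.sum_comm]
    exact Finset.sum_congr rfl fun β hβ => hR.sum_comp_reflect hβ (φ β)
  calc _ = ∑ α ∈ R, ∑ β ∈ R, (φ α β - φ β (reflect β α)) :=
        Finset.sum_congr rfl fun α hα => Finset.sum_congr rfl fun β hβ => hsplit α hα β hβ
    _ = 0 := by simp only [Finset.sum_sub_distrib, hperm, sub_self]

lemma sum_wedge_mul_divDiff_apply_reflect (hR : IsRootSystem R)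
    (hκ : ∀ α ∈ R, ∀ β ∈ R, κ (reflect α β) = κ β) {α : E} (hα : α ∈ R) (f : E → ℂ)
    (ξ η : E) :
    ∑ β ∈ R, κ β * wedge ξ η α β * divDiff β f (reflect α x)
      = ∑ β ∈ R, κ β * wedge ξ η α β * divDiff β (fun y => f (reflect α y)) x := by
  rw [← hR.sum_comp_reflect hα]
  refine Finset.sum_congr rfl fun β hβ => ?_
  rw [hκ α hα β hβ, wedge_reflect_right (hR.norm_sq α hα),
    divDiff_reflect_reflect (hR.norm_sq β hβ)]

lemma sum_wedge_mul_divDiff_divDiff (hR : IsRootSystem R)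
    (hκ : ∀ α ∈ R, ∀ β ∈ R, κ (reflect α β) = κ β) (hx : ∀ α ∈ R, ⟪α, x⟫ ≠ 0) {α : E}
    (hα : α ∈ R) (f : E → ℂ) (ξ η : E) :
    ∑ β ∈ R, κ α * κ β * wedge ξ η α β * divDiff α (divDiff β f) x
      = ∑ β ∈ R, κ α * κ β * ((wedge ξ η α β / (⟪α, x⟫ * ⟪β, x⟫) : ℝ) : ℂ)
          * ((f x - f (reflect β x) - f (reflect α x)) + f (reflect α (reflect β x))) := by
  calc _ = κ α / ⟪α, x⟫ * (∑ β ∈ R, κ β * wedge ξ η α β * divDiff β f x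
        - ∑ β ∈ R, κ β * wedge ξ η α β * divDiff β f (reflect α x)) := by
        rw [← Finset.sum_sub_distrib, Finset.mul_sum]
        refine Finset.sum_congr rfl fun β _ => ?_
        rw [divDiff.eq_1 α]
        ring
    _ = κ α / ⟪α, x⟫ * (∑ β ∈ R, κ β * wedge ξ η α β * divDiff β f x
        - ∑ β ∈ R, κ β * wedge ξ η α β * divDiff β (fun y => f (reflect α y)) x) := by
        rw [hR.sum_wedge_mul_divDiff_apply_reflect hκ hα]
    _ = _ := by
        rw [← Finset.sum_sub_distrib, Finset.mul_sum]
        refine Finset.sum_congr rfl fun β hβ => ?_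
        have hαx : ((⟪α, x⟫ : ℝ) : ℂ) ≠ 0 := by exact_mod_cast hx α hα
        have hβx : ((⟪β, x⟫ : ℝ) : ℂ) ≠ 0 := by exact_mod_cast hx β hβ
        simp only [divDiff]
        push_cast
        field_simp
        ring

lemma sum_sum_wedge_mul_divDiff_divDiff (hR : IsRootSystem R)
    (hκ : ∀ α ∈ R, ∀ β ∈ R, κ (reflect α β) = κ β) (hx : ∀ α ∈ R, ⟪α, x⟫ ≠ 0) (f : E → ℂ)
    (ξ η : E) :
    ∑ α ∈ R, ∑ β ∈ R, κ α * κ β * wedge ξ η α β * divDiff α (divDiff β f) x = 0 := by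
  rw [Finset.sum_congr rfl fun α hα => hR.sum_wedge_mul_divDiff_divDiff hκ hx hα f ξ η]
  simp only [mul_add, Finset.sum_add_distrib]
  rw [Finset.sum_sum_antisymm_mul_symm_eq_zero, hR.sum_sum_wedge_mul_apply_reflect_reflect hκ hx,
    add_zero]
  · intro α β
    rw [wedge_swap]
    push_cast
    ring
  · intro α β
    ring

lemma dunklSym_comm (hR : IsRootSystem R) (hκ : ∀ α ∈ R, ∀ β ∈ R, κ (reflect α β) = κ β)
    {f : E → ℂ} (hf : ContDiff ℝ 2 f) (hx : ∀ α ∈ R, ⟪α, x⟫ ≠ 0) (ξ η : E) :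
    dunklSym R κ ξ (dunklSym R κ η f) x = dunklSym R κ η (dunklSym R κ ξ f) x := by
  have hsymm : fderiv ℝ (fderiv ℝ f) x ξ η = fderiv ℝ (fderiv ℝ f) x η ξ :=
    hf.contDiffAt.isSymmSndFDerivAt (by simp [minSmoothness_of_isRCLikeNormedField]) ξ η
  have hmixed : ∑ α ∈ R, κ α * (⟪α, ξ⟫ * ⟪α, η⟫)
        * ((fderiv ℝ f (reflect α x) α - divDiff α f x) / ⟪α, x⟫)
      = ∑ α ∈ R, κ α * (⟪α, η⟫ * ⟪α, ξ⟫)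
        * ((fderiv ℝ f (reflect α x) α - divDiff α f x) / ⟪α, x⟫) := by
    simp only [mul_comm (⟪_, ξ⟫ : ℂ)]
  have hdouble : ∑ α ∈ R, ∑ β ∈ R, κ α * κ β * ⟪α, ξ⟫ * ⟪β, η⟫ * divDiff α (divDiff β f) x
      - ∑ α ∈ R, ∑ β ∈ R, κ α * κ β * ⟪α, η⟫ * ⟪β, ξ⟫ * divDiff α (divDiff β f) x
      = ∑ α ∈ R, ∑ β ∈ R, κ α * κ β * wedge ξ η α β * divDiff α (divDiff β f) x := by
    simp only [← Finset.sum_sub_distrib]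
    refine Finset.sum_congr rfl fun α _ => Finset.sum_congr rfl fun β _ => ?_
    rw [wedge]
    push_cast
    ring
  rw [dunklSym_dunklSym hR.norm_sq hf hx, dunklSym_dunklSym hR.norm_sq hf hx]
  linear_combination hsymm + 2⁻¹ * hmixed
    + 4⁻¹ * (hdouble.trans (hR.sum_sum_wedge_mul_divDiff_divDiff hκ hx f ξ η))

end IsRootSystem

theorem dunkl_comm_general
    (R Rp : Finset E) (hR : IsRootSystem R) (hRp : IsPositiveSystem R Rp)
    (κ : E → ℂ)
    (hκ : ∀ u ∈ coxeterGroup R, ∀ α ∈ R, κ (u α) = κ α)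
    (ξ η : E) (f : E → ℂ) (hf : ContDiff ℝ (⊤ : ℕ∞) f)
    (x : E) (hx : ∀ α ∈ R, (inner ℝ α x : ℝ) ≠ 0) :
    dunkl Rp κ ξ (fun y => dunkl Rp κ η f y) x
      = dunkl Rp κ η (fun y => dunkl Rp κ ξ f y) x := by
  have hκneg : ∀ α ∈ Rp, κ (-α) = κ α := fun α hα =>
    apply_neg_of_coxeterGroup_invariant hκ ((hRp.1 α).2 (Or.inl hα))
  simp only [dunkl_eq_dunklSym hRp hκneg]
  exact hR.dunklSym_comm (fun α hα β hβ => apply_reflect_of_coxeterGroup_invariant hκ hα hβ)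
    (hf.of_le (by norm_cast)) hx ξ η

/-- Dunkl operators commute: for a smooth function `f` and every point `x` of
`P = E ∖ ⋃_{α ∈ R} H_α`, we have `T_{ξ,κ} T_{η,κ} f (x) = T_{η,κ} T_{ξ,κ} f (x)`. -/
theorem dunkl_comm [FiniteDimensional ℝ E]
    (R Rp : Finset E) (hR : IsRootSystem R) (hRp : IsPositiveSystem R Rp)
    (κ : E → ℂ)
    (hκ : ∀ u ∈ coxeterGroup R, ∀ α ∈ R, κ (u α) = κ α)
    (ξ η : E) (f : E → ℂ) (hf : ContDiff ℝ (⊤ : ℕ∞) f)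
    (x : E) (hx : ∀ α ∈ R, (inner ℝ α x : ℝ) ≠ 0) :
    dunkl Rp κ ξ (fun y => dunkl Rp κ η f y) x
      = dunkl Rp κ η (fun y => dunkl Rp κ ξ f y) x :=
  dunkl_comm_general R Rp hR hRp κ hκ ξ η f hf x hx
end
end

section
/- Let m ≥ 2 be an integer and θ a real number with sin θ ≠ 0 and m·θ ≡ π (mod 2π), so that multiplication by e^{iθ} is a planar rotation ϱ satisfying ϱ^m = −I. Identify the Euclidean plane with ℂ equipped with the real inner product ⟨z,w⟩ = Re(z·conj(w)). Let v ∈ ℂ with |v| = 1, and let x ∈ ℂ be such that ⟨x, v·e^{ikθ}⟩ ≠ 0 for k = 0, 1, …, m−1. Then Σ_{k=0}^{m−2} 1/(⟨x, v·e^{ikθ}⟩·⟨x, v·e^{i(k+1)θ}⟩) = 1/(⟨x, v·e^{i(m−1)θ}⟩·⟨x, v⟩). -/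
/-!
Write `x * conj v = r e^{iφ}`. Then `⟨x, v e^{it}⟩ = r cos (φ - t)`, and since
`1 / (cos a cos b) = (tan a - tan b) / sin (a - b)` the sum telescopes to
`(tan φ - tan (φ - (m-1)θ)) / (r² sin θ) = sin ((m-1)θ) / (r² sin θ cos φ cos (φ - (m-1)θ))`.
Finally `mθ ≡ π` gives `sin ((m-1)θ) = sin (π - θ) = sin θ`.
-/

noncomputable section

def rinner (z w : ℂ) : ℝ := (z * (starRingEnd ℂ) w).re

theorem Real.tan_sub_tan {a b : ℝ} (ha : Real.cos a ≠ 0) (hb : Real.cos b ≠ 0) :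
    Real.tan a - Real.tan b = Real.sin (a - b) / (Real.cos a * Real.cos b) := by
  rw [Real.tan_eq_sin_div_cos, Real.tan_eq_sin_div_cos, Real.sin_sub]
  field_simp

theorem Real.sum_range_inv_cos_mul_cos {φ θ : ℝ} {n : ℕ} (hθ : Real.sin θ ≠ 0)
    (hcos : ∀ k ≤ n, Real.cos (φ - k * θ) ≠ 0) :
    ∑ k ∈ Finset.range n, (Real.cos (φ - k * θ) * Real.cos (φ - (k + 1) * θ))⁻¹
      = Real.sin (n * θ) / (Real.sin θ * (Real.cos φ * Real.cos (φ - n * θ))) := by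
  have hterm : ∀ k ∈ Finset.range n,
      (Real.cos (φ - k * θ) * Real.cos (φ - (k + 1) * θ))⁻¹
        = Real.tan (φ - k * θ) / Real.sin θ - Real.tan (φ - (k + 1 : ℕ) * θ) / Real.sin θ := by
    intro k hk
    have hk := Finset.mem_range.mp hk
    have hk1 := hcos (k + 1) hk
    push_cast at hk1 ⊢
    rw [div_sub_div_same, Real.tan_sub_tan (hcos k hk.le) hk1]
    field_simp
    ring_nf
  have h0 : Real.cos φ ≠ 0 := by simpa using hcos 0 (Nat.zero_le n)
  rw [Finset.sum_congr rfl hterm, Finset.sum_range_sub', div_sub_div_same]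
  simp only [Nat.cast_zero, zero_mul, sub_zero]
  rw [Real.tan_sub_tan h0 (hcos n le_rfl), sub_sub_cancel]
  field_simp

theorem rinner_mul_exp (x v : ℂ) (t : ℝ) :
    rinner x (v * Complex.exp (Complex.I * t))
      = ‖x * (starRingEnd ℂ) v‖ * Real.cos (Complex.arg (x * (starRingEnd ℂ) v) - t) := by
  have hconj :
      (starRingEnd ℂ) (Complex.exp (Complex.I * t)) = Complex.exp ((-t : ℝ) * Complex.I) := by
    rw [← Complex.exp_conj, map_mul, Complex.conj_I, Complex.conj_ofReal, Complex.ofReal_neg]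
    ring_nf
  rw [rinner, map_mul, ← mul_assoc, hconj, Complex.mul_re, Complex.exp_ofReal_mul_I_re,
    Complex.exp_ofReal_mul_I_im, Real.cos_neg, Real.sin_neg, Real.cos_sub,
    ← Complex.norm_mul_cos_arg, ← Complex.norm_mul_sin_arg]
  ring

theorem Real.sin_pred_mul_of_mul_eq_odd_pi {m : ℕ} (hm : 1 ≤ m) {θ : ℝ} {j : ℤ}
    (h : m * θ = Real.pi + 2 * Real.pi * j) : Real.sin ((m - 1 : ℕ) * θ) = Real.sin θ := by
  rw [Nat.cast_sub hm, Nat.cast_one, sub_mul, one_mul, h,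
    show Real.pi + 2 * Real.pi * j - θ = Real.pi - θ + j * (2 * Real.pi) by ring,
    Real.sin_add_int_mul_two_pi, Real.sin_pi_sub]

theorem planar_rotation_sum_general (m : ℕ) (hm : 2 ≤ m) (θ : ℝ) (hθ : Real.sin θ ≠ 0)
    (hmθ : ∃ j : ℤ, (m : ℝ) * θ = Real.pi + 2 * Real.pi * j)
    (v : ℂ) (x : ℂ)
    (hx : ∀ k < m, rinner x (v * Complex.exp (Complex.I * ((k : ℂ) * (θ : ℂ)))) ≠ 0) :
    ∑ k ∈ Finset.range (m - 1),
        (rinner x (v * Complex.exp (Complex.I * ((k : ℂ) * (θ : ℂ)))) *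
          rinner x (v * Complex.exp (Complex.I * (((k : ℂ) + 1) * (θ : ℂ)))))⁻¹
      = (rinner x (v * Complex.exp (Complex.I * ((((m : ℕ) - 1 : ℕ) : ℂ) * (θ : ℂ)))) *
          rinner x v)⁻¹ := by
  obtain ⟨j, hj⟩ := hmθ
  set w := x * (starRingEnd ℂ) v
  have hpolar (s : ℝ) :
      rinner x (v * Complex.exp (Complex.I * (s * θ))) = ‖w‖ * Real.cos (w.arg - s * θ) := by
    rw [← Complex.ofReal_mul]
    exact rinner_mul_exp x v (s * θ)
  have hpolar_nat (k : ℕ) :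
      rinner x (v * Complex.exp (Complex.I * (k * θ))) = ‖w‖ * Real.cos (w.arg - k * θ) := by
    exact_mod_cast hpolar k
  have hpolar_succ (k : ℕ) : rinner x (v * Complex.exp (Complex.I * ((k + 1) * θ)))
      = ‖w‖ * Real.cos (w.arg - (k + 1) * θ) := by
    exact_mod_cast hpolar (k + 1)
  have hpolar_zero : rinner x v = ‖w‖ * Real.cos w.arg := by simpa using hpolar_nat 0
  have hw : ‖w‖ ≠ 0 := left_ne_zero_of_mul (hpolar_nat 0 ▸ hx 0 (by omega))
  have hcos (k : ℕ) (hk : k < m) : Real.cos (w.arg - k * θ) ≠ 0 :=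
    right_ne_zero_of_mul (hpolar_nat k ▸ hx k hk)
  simp only [hpolar_nat, hpolar_succ, hpolar_zero, mul_mul_mul_comm, mul_inv (‖w‖ * ‖w‖),
    ← Finset.mul_sum]
  rw [Real.sum_range_inv_cos_mul_cos hθ (fun k hk => hcos k (by omega)),
    Real.sin_pred_mul_of_mul_eq_odd_pi (by omega) hj]
  field_simp

/-- Planar identity: if `ϱ` is the rotation by `θ` with `ϱ^m = −I` (i.e. `mθ ≡ π (mod 2π)`)
and `sin θ ≠ 0`, `v` a unit vector, and `x` not orthogonal to any of `v, vϱ, …, vϱ^{m−1}`, then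
`Σ_{k=0}^{m−2} 1/(⟨x, vϱ^k⟩⟨x, vϱ^{k+1}⟩) = 1/(⟨x, vϱ^{m−1}⟩⟨x, v⟩)`. -/
theorem planar_rotation_sum (m : ℕ) (hm : 2 ≤ m) (θ : ℝ) (hθ : Real.sin θ ≠ 0)
    (hmθ : ∃ j : ℤ, (m : ℝ) * θ = Real.pi + 2 * Real.pi * j)
    (v : ℂ) (hv : ‖v‖ = 1) (x : ℂ)
    (hx : ∀ k < m, rinner x (v * Complex.exp (Complex.I * ((k : ℂ) * (θ : ℂ)))) ≠ 0) :
    ∑ k ∈ Finset.range (m - 1),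
        (rinner x (v * Complex.exp (Complex.I * ((k : ℂ) * (θ : ℂ)))) *
          rinner x (v * Complex.exp (Complex.I * (((k : ℂ) + 1) * (θ : ℂ)))))⁻¹
      = (rinner x (v * Complex.exp (Complex.I * ((((m : ℕ) - 1 : ℕ) : ℂ) * (θ : ℂ)))) *
          rinner x v)⁻¹ :=
  planar_rotation_sum_general m hm θ hθ hmθ v x hx
end
end

section
/- Let E be a real inner product space, let v ∈ E be nonzero, let k ≥ 1 be an integer, let v_0 = v, v_1, …, v_k be vectors in E and c_1 = 1, c_2, …, c_k be real numbers such that v = c_{j+1}·v_j − c_j·v_{j+1} for every 1 ≤ j ≤ k−1. Then for every x ∈ E such that ⟨x,v⟩ ≠ 0 and ⟨x,v_j⟩ ≠ 0 for all 1 ≤ j ≤ k, Σ_{j=1}^{k} 1/(⟨x, v_{j−1}⟩·⟨x, v_j⟩) = c_k/(⟨x, v⟩·⟨x, v_k⟩). -/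
open Finset

/- Writing `aⱼ = ⟪x, vⱼ⟫`, the recurrence gives `a₀ = c_{j+1} aⱼ - cⱼ a_{j+1}`, i.e.
`1 / (aⱼ a_{j+1}) = (c_{j+1} / a_{j+1} - cⱼ / aⱼ) / a₀` for `j ≥ 1`, so the sum telescopes;
the first term `1 / (a₀ a₁) = c₁ / (a₀ a₁)` starts it off. -/

theorem sum_range_inv_mul_succ_eq_div_of_recurrence (a c : ℕ → ℝ) (hc1 : c 1 = 1) {k : ℕ}
    (hk : 1 ≤ k) (hrec : ∀ j, 1 ≤ j → j < k → a 0 = c (j + 1) * a j - c j * a (j + 1))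
    (ha : ∀ j ≤ k, a j ≠ 0) :
    ∑ j ∈ range k, (a j * a (j + 1))⁻¹ = c k / (a 0 * a k) := by
  induction k, hk using Nat.le_induction with
  | base => simp [hc1, div_eq_mul_inv]
  | succ n hn ih =>
    rw [sum_range_succ, ih (fun j hj hjn => hrec j hj (by omega)) (fun j hj => ha j (by omega))]
    have h0 := ha 0 (by omega)
    have hn' := ha n (by omega)
    have hn1 := ha (n + 1) le_rfl
    field_simp
    linear_combination hrec n hn (by omega)

theorem recursive_inner_sum_general {E : Type*} [NormedAddCommGroup E] [InnerProductSpace ℝ E]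
    (v : E) (k : ℕ) (hk : 1 ≤ k)
    (w : ℕ → E) (hw0 : w 0 = v) (c : ℕ → ℝ) (hc1 : c 1 = 1)
    (hrec : ∀ j : ℕ, 1 ≤ j → j ≤ k - 1 → v = c (j + 1) • w j - c j • w (j + 1))
    (x : E) (hxv : (inner ℝ x v : ℝ) ≠ 0)
    (hxw : ∀ j : ℕ, 1 ≤ j → j ≤ k → (inner ℝ x (w j) : ℝ) ≠ 0) :
    ∑ j ∈ Finset.range k, ((inner ℝ x (w j) : ℝ) * (inner ℝ x (w (j + 1)) : ℝ))⁻¹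
      = c k / ((inner ℝ x v : ℝ) * (inner ℝ x (w k) : ℝ)) := by
  subst hw0
  refine sum_range_inv_mul_succ_eq_div_of_recurrence (fun j ↦ inner ℝ x (w j)) c hc1 hk ?_ ?_
  · intro j hj hjk
    rw [← real_inner_smul_right, ← real_inner_smul_right, ← inner_sub_right,
      ← hrec j hj (by omega)]
  · intro j hj
    rcases j.eq_zero_or_pos with rfl | hj0
    · exact hxv
    · exact hxw j hj0 hj

/-- Recursive summation identity: if `v₀ = v, v₁, …, v_k` and `c₁ = 1, c₂, …, c_k` satisfy
`v = c_{j+1} v_j − c_j v_{j+1}` for `1 ≤ j ≤ k−1`, then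
`Σ_{j=1}^{k} 1/(⟨x,v_{j−1}⟩⟨x,v_j⟩) = c_k/(⟨x,v⟩⟨x,v_k⟩)`. -/
theorem recursive_inner_sum {E : Type*} [NormedAddCommGroup E] [InnerProductSpace ℝ E]
    (v : E) (hv : v ≠ 0) (k : ℕ) (hk : 1 ≤ k)
    (w : ℕ → E) (hw0 : w 0 = v) (c : ℕ → ℝ) (hc1 : c 1 = 1)
    (hrec : ∀ j : ℕ, 1 ≤ j → j ≤ k - 1 → v = c (j + 1) • w j - c j • w (j + 1))
    (x : E) (hxv : (inner ℝ x v : ℝ) ≠ 0)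
    (hxw : ∀ j : ℕ, 1 ≤ j → j ≤ k → (inner ℝ x (w j) : ℝ) ≠ 0) :
    ∑ j ∈ Finset.range k, ((inner ℝ x (w j) : ℝ) * (inner ℝ x (w (j + 1)) : ℝ))⁻¹
      = c k / ((inner ℝ x v : ℝ) * (inner ℝ x (w k) : ℝ)) :=
  recursive_inner_sum_general v k hk w hw0 c hc1 hrec x hxv hxw
end

section
/- Let E be a real inner product space, let v ∈ E, let k ≥ 0 be an integer, and let v_0 = v, v_1, …, v_{k+1} be vectors in E such that v_j = v + v_{j+1} for every 1 ≤ j ≤ k (a sequence of arithmetic type). Then for every x ∈ E such that ⟨x, v⟩ ≠ 0 and ⟨x, v_j⟩ ≠ 0 for all 0 ≤ j ≤ k+1, Σ_{j=0}^{k} coth(⟨x, v_j⟩)·coth(⟨x, v_{j+1}⟩) = coth(⟨x, v⟩)·coth(⟨x, v_{k+1}⟩) + k. -/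
/-! Applying the addition formula for `coth` to `⟨x, v_j⟩ = ⟨x, v⟩ + ⟨x, v_{j+1}⟩` turns each
term `coth⟨x, v_j⟩ coth⟨x, v_{j+1}⟩` with `j ≥ 1` into
`coth⟨x, v⟩ (coth⟨x, v_{j+1}⟩ - coth⟨x, v_j⟩) + 1`, so the sum telescopes. -/

noncomputable section

/-- The hyperbolic cotangent `coth t = cosh t / sinh t`. -/
def coth (t : ℝ) : ℝ := Real.cosh t / Real.sinh t

theorem coth_add_mul_add {a b : ℝ} (ha : a ≠ 0) (hb : b ≠ 0) (hab : a + b ≠ 0) :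
    coth (a + b) * (coth a + coth b) = coth a * coth b + 1 := by
  have hsa := Real.sinh_ne_zero.mpr ha
  have hsb := Real.sinh_ne_zero.mpr hb
  have hsab := Real.sinh_ne_zero.mpr hab
  unfold coth
  field_simp
  rw [Real.sinh_add, Real.cosh_add]
  ring

theorem sum_range_coth_mul_coth_of_arithmetic (s : ℝ) (k : ℕ) (t : ℕ → ℝ) (h0 : t 0 = s)
    (hstep : ∀ j, 1 ≤ j → j ≤ k → t j = s + t (j + 1)) (hne : ∀ j ≤ k + 1, t j ≠ 0) :
    ∑ j ∈ Finset.range (k + 1), coth (t j) * coth (t (j + 1))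
      = coth s * coth (t (k + 1)) + k := by
  induction k with
  | zero => simp [h0]
  | succ n ih =>
    have hs : s ≠ 0 := h0 ▸ hne 0 (Nat.zero_le _)
    have hlast : t (n + 1) = s + t (n + 2) := hstep (n + 1) (Nat.le_add_left 1 n) le_rfl
    have hadd := coth_add_mul_add hs (hne (n + 2) le_rfl) (hlast ▸ hne (n + 1) (by omega))
    rw [Finset.sum_range_succ,
      ih (fun j h1 h2 => hstep j h1 (by omega)) (fun j hj => hne j (by omega)), hlast]
    push_cast
    linear_combination hadd

theorem coth_inner_sum_arithmetic_general {E : Type*} [NormedAddCommGroup E] [InnerProductSpace ℝ E]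
    (v : E) (k : ℕ) (w : ℕ → E) (hw0 : w 0 = v)
    (hrec : ∀ j : ℕ, 1 ≤ j → j ≤ k → w j = v + w (j + 1))
    (x : E)
    (hxw : ∀ j : ℕ, j ≤ k + 1 → (inner ℝ x (w j) : ℝ) ≠ 0) :
    ∑ j ∈ Finset.range (k + 1), coth (inner ℝ x (w j) : ℝ) * coth (inner ℝ x (w (j + 1)) : ℝ)
      = coth (inner ℝ x v : ℝ) * coth (inner ℝ x (w (k + 1)) : ℝ) + (k : ℝ) :=
  sum_range_coth_mul_coth_of_arithmetic _ k _ (by rw [hw0])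
    (fun j h1 h2 => by rw [hrec j h1 h2, inner_add_right]) hxw

/-- For a sequence `v₀ = v, v₁, …, v_{k+1}` of arithmetic type (`v_j = v + v_{j+1}` for
`1 ≤ j ≤ k`) and `x` with `⟨x,v⟩ ≠ 0` and `⟨x,v_j⟩ ≠ 0` for all `0 ≤ j ≤ k+1`:
`Σ_{j=0}^{k} coth⟨x,v_j⟩·coth⟨x,v_{j+1}⟩ = coth⟨x,v⟩·coth⟨x,v_{k+1}⟩ + k`. -/
theorem coth_inner_sum_arithmetic {E : Type*} [NormedAddCommGroup E] [InnerProductSpace ℝ E]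
    (v : E) (k : ℕ) (w : ℕ → E) (hw0 : w 0 = v)
    (hrec : ∀ j : ℕ, 1 ≤ j → j ≤ k → w j = v + w (j + 1))
    (x : E) (hxv : (inner ℝ x v : ℝ) ≠ 0)
    (hxw : ∀ j : ℕ, j ≤ k + 1 → (inner ℝ x (w j) : ℝ) ≠ 0) :
    ∑ j ∈ Finset.range (k + 1), coth (inner ℝ x (w j) : ℝ) * coth (inner ℝ x (w (j + 1)) : ℝ)
      = coth (inner ℝ x v : ℝ) * coth (inner ℝ x (w (k + 1)) : ℝ) + (k : ℝ) :=
  coth_inner_sum_arithmetic_general v k w hw0 hrec x hxw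
end
end

section
/- Let E be a finite-dimensional real inner product space and R a root system in E, with Coxeter group G = G(R). Then for every x ∈ E, the stabilizer of x in G is trivial if and only if x ∈ P := E ∖ ⋃_{α∈R} H_α. Equivalently: the action of G on P is free, and every point lying on some hyperplane H_α has nontrivial stabilizer. -/
noncomputable section

variable {E : Type*} [NormedAddCommGroup E] [InnerProductSpace ℝ E]

/-!
Fix `x` off all the hyperplanes `H_α` and call `α ∈ R` positive when `⟪α, x⟫ > 0`. Let `Δ` be a
smallest set of positive roots whose cone contains every positive root. Each `δ ∈ Δ` spans an
extreme ray of that cone, which forces `σ_δ` to keep every positive root other than `δ` positive.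
Hence the `σ_δ` generate `G` (induct on `⟪α, x⟫`: for a positive root `α ∉ Δ` some `δ ∈ Δ` has
`⟪δ, α⟫ > 0`, and `σ_α` is conjugate under `σ_δ` to `σ_{σ_δ α}`, a lower positive root), and they
satisfy the deletion condition: if a word `w` in them sends `δ ∈ Δ` to a negative root, then `w σ_δ`
is a shorter word. A shortest word `w σ_δ` fixing `x` sends `δ` to `-w δ`, which pairs with `x` as
`δ` does, so `w δ` is negative and the word can be shortened: it is empty. Conversely, a point of
`H_α` is fixed by `σ_α ≠ 1`.
-/

open Submodule RealInnerProductSpace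

def rootReflection (α : E) : E ≃ₗᵢ[ℝ] E := (ℝ ∙ α)ᗮ.reflection

lemma coe_rootReflection (α : E) : ⇑(rootReflection α) = reflect α := by
  funext y
  rw [rootReflection, reflection_orthogonal_apply, reflection_singleton_apply, reflect]
  simp only [RCLike.ofReal_real_eq_id, id_eq, neg_sub, two_smul]
  module

lemma rootReflection_apply (α y : E) :
    rootReflection α y = y - (2 * ⟪α, y⟫ / ‖α‖ ^ 2) • α := by
  rw [coe_rootReflection, reflect]

lemma rootReflection_neg (α : E) : rootReflection (-α) = rootReflection α := by
  ext y
  simp only [rootReflection_apply, inner_neg_left, norm_neg]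
  module

lemma rootReflection_self (α : E) : rootReflection α α = -α :=
  reflection_orthogonalComplement_singleton_eq_neg α

lemma rootReflection_apply_of_inner_eq_zero {α y : E} (h : ⟪α, y⟫ = 0) :
    rootReflection α y = y := by
  simp [rootReflection_apply, h]

@[simp]
lemma rootReflection_apply_rootReflection (α y : E) : rootReflection α (rootReflection α y) = y :=
  reflection_reflection _ _

@[simp]
lemma rootReflection_mul_self (α : E) : rootReflection α * rootReflection α = 1 :=
  reflection_mul_reflection _

@[simp]
lemma rootReflection_inv (α : E) : (rootReflection α)⁻¹ = rootReflection α :=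
  reflection_inv

lemma rootReflection_map (g : E ≃ₗᵢ[ℝ] E) (α : E) :
    rootReflection (g α) = g * rootReflection α * g⁻¹ := by
  ext y
  have h : ⟪α, g⁻¹ y⟫ = ⟪g α, y⟫ := by
    rw [← g.inner_map_map]; simp
  simp [rootReflection_apply, ← h]

lemma rootReflection_ne_one {α : E} (hα : α ≠ 0) : rootReflection α ≠ 1 := by
  intro h
  have h' := rootReflection_self α
  rw [h, LinearIsometryEquiv.coe_one, id_eq, eq_comm, neg_eq_iff_add_eq_zero, ← two_smul ℝ,
    smul_eq_zero] at h'
  exact hα (h'.resolve_left two_ne_zero)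

lemma inner_rootReflection_apply_lt {d α x : E} (hdα : 0 < ⟪d, α⟫) (hdx : 0 < ⟪d, x⟫) :
    ⟪rootReflection d α, x⟫ < ⟪α, x⟫ := by
  have hd : 0 < ‖d‖ := norm_pos_iff.mpr fun h => by simp [h] at hdx
  rw [rootReflection_apply, inner_sub_left, real_inner_smul_left]
  exact sub_lt_self _ (mul_pos (by positivity) hdx)

lemma inner_nonneg_of_mem_hull {s : Set E} {y v : E} (hs : ∀ d ∈ s, 0 ≤ ⟪d, y⟫)
    (hv : v ∈ PointedCone.hull ℝ s) : 0 ≤ ⟪v, y⟫ := by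
  induction hv using Submodule.span_induction with
  | mem d hd => exact hs d hd
  | zero => simp
  | add v w _ _ hv hw => rw [inner_add_left]; positivity
  | smul a v _ hv => rw [← Nonneg.coe_smul, real_inner_smul_left]; exact mul_nonneg a.2 hv

lemma eq_zero_of_mem_hull_of_inner_nonpos {s : Set E} {x v : E} (hs : ∀ d ∈ s, 0 < ⟪d, x⟫)
    (hv : v ∈ PointedCone.hull ℝ s) (hvx : ⟪v, x⟫ ≤ 0) : v = 0 := by
  suffices 0 ≤ ⟪v, x⟫ ∧ (⟪v, x⟫ ≤ 0 → v = 0) from this.2 hvx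
  clear hvx
  induction hv using Submodule.span_induction with
  | mem d hd => exact ⟨(hs d hd).le, fun h => absurd h (hs d hd).not_ge⟩
  | zero => simp
  | add v w _ _ hv hw =>
    rw [inner_add_left]
    refine ⟨add_nonneg hv.1 hw.1, fun h => ?_⟩
    rw [hv.2 (by linarith [hw.1]), hw.2 (by linarith [hv.1]), add_zero]
  | smul a v _ hv =>
    rw [← Nonneg.coe_smul, real_inner_smul_left]
    refine ⟨mul_nonneg a.2 hv.1, fun h => ?_⟩
    rcases a.2.eq_or_lt with ha | ha
    · rw [← ha, zero_smul]
    · rw [hv.2 (nonpos_of_mul_nonpos_right h ha), smul_zero]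

lemma exists_eq_smul_of_add_eq_smul {s : Set E} {x δ β γ : E} {c : ℝ}
    (hs : ∀ d ∈ s, 0 < ⟪d, x⟫) (hδx : 0 ≤ ⟪δ, x⟫) (hδ : δ ∉ PointedCone.hull ℝ s)
    (hβ : β ∈ PointedCone.hull ℝ (insert δ s)) (hγ : γ ∈ PointedCone.hull ℝ (insert δ s))
    (h : β + γ = c • δ) : ∃ t : ℝ, β = t • δ := by
  obtain ⟨a, β', hβ', rfl⟩ := mem_span_insert.mp hβ
  obtain ⟨b, γ', hγ', rfl⟩ := mem_span_insert.mp hγ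
  have hsum : β' + γ' = (c - a - b) • δ := by
    rw [sub_smul, sub_smul, ← h, ← Nonneg.coe_smul, ← Nonneg.coe_smul]; abel
  rcases lt_or_ge 0 (c - a - b) with hpos | hnonpos
  · refine absurd ?_ hδ
    have : δ = (c - a - b)⁻¹ • (β' + γ') := by
      rw [hsum, smul_smul, inv_mul_cancel₀ hpos.ne', one_smul]
    rw [this, ← Nonneg.mk_smul _ (inv_nonneg.mpr hpos.le)]
    exact smul_mem _ _ (add_mem hβ' hγ')
  · have hγ'x := inner_nonneg_of_mem_hull (fun d hd => (hs d hd).le) hγ'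
    have hsumx : ⟪β' + γ', x⟫ ≤ 0 := by
      rw [hsum, real_inner_smul_left]; exact mul_nonpos_of_nonpos_of_nonneg hnonpos hδx
    rw [inner_add_left] at hsumx
    refine ⟨a, ?_⟩
    rw [eq_zero_of_mem_hull_of_inner_nonpos hs hβ' (by linarith), add_zero, Nonneg.coe_smul]

lemma coxeterGroup_eq_closure (R : Finset E) :
    coxeterGroup R = Subgroup.closure (rootReflection '' R) := by
  rw [coxeterGroup]
  congr 1
  ext g
  simp only [Set.mem_ofPred_eq, Set.mem_image, Finset.mem_coe, ← coe_rootReflection, eq_comm]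
  exact exists_congr fun α => and_congr_right fun _ => DFunLike.coe_fn_eq

lemma rootReflection_mem_coxeterGroup {R : Finset E} {α : E} (hα : α ∈ R) :
    rootReflection α ∈ coxeterGroup R := by
  rw [coxeterGroup_eq_closure]
  exact Subgroup.subset_closure ⟨α, hα, rfl⟩

lemma IsRootSystem.rootReflection_apply_mem {R : Finset E} (hR : IsRootSystem R) {α β : E}
    (hα : α ∈ R) (hβ : β ∈ R) : rootReflection α β ∈ R := by
  have h : reflect α β ∈ reflect α '' (R : Set E) := ⟨β, hβ, rfl⟩
  rwa [hR.reflect_eq α hα, ← coe_rootReflection] at h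

lemma IsRootSystem.apply_mem_of_mem_coxeterGroup {R : Finset E} (hR : IsRootSystem R)
    {g : E ≃ₗᵢ[ℝ] E} (hg : g ∈ coxeterGroup R) {β : E} (hβ : β ∈ R) : g β ∈ R := by
  rw [coxeterGroup_eq_closure] at hg
  induction hg using Subgroup.closure_induction'' generalizing β with
  | mem _ hg | inv_mem _ hg =>
    obtain ⟨α, hα, rfl⟩ := hg
    simpa using hR.rootReflection_apply_mem hα hβ
  | one => exact hβ
  | mul g h _ _ hg hh => exact hg (hh hβ)

lemma list_prod_map_rootReflection_mem_coxeterGroup {R : Finset E} {l : List E}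
    (hl : ∀ a ∈ l, a ∈ R) : (l.map rootReflection).prod ∈ coxeterGroup R :=
  list_prod_mem fun _ hg => by
    obtain ⟨a, ha, rfl⟩ := List.mem_map.mp hg
    exact rootReflection_mem_coxeterGroup (hl a ha)

lemma exists_list_of_mem_closure_rootReflection {s : Set E} {g : E ≃ₗᵢ[ℝ] E}
    (hg : g ∈ Subgroup.closure (rootReflection '' s)) :
    ∃ l : List E, (∀ a ∈ l, a ∈ s) ∧ (l.map rootReflection).prod = g := by
  induction hg using Subgroup.closure_induction'' with
  | mem _ hg | inv_mem _ hg =>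
    obtain ⟨α, hα, rfl⟩ := hg
    exact ⟨[α], by simpa using hα, by simp⟩
  | one => exact ⟨[], by simp, rfl⟩
  | mul g h _ _ hg hh =>
    obtain ⟨l, hl, rfl⟩ := hg
    obtain ⟨l', hl', rfl⟩ := hh
    exact ⟨l ++ l', fun a ha => (List.mem_append.mp ha).elim (hl a) (hl' a), by simp⟩

def positiveRoots (R : Finset E) (x : E) : Finset E := {α ∈ R | 0 < ⟪α, x⟫}

lemma mem_positiveRoots {R : Finset E} {x α : E} :
    α ∈ positiveRoots R x ↔ α ∈ R ∧ 0 < ⟪α, x⟫ :=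
  Finset.mem_filter

lemma IsRootSystem.neg_mem_positiveRoots {R : Finset E} (hR : IsRootSystem R) {x α : E}
    (hα : α ∈ R) (hαx : ⟪α, x⟫ < 0) : -α ∈ positiveRoots R x :=
  mem_positiveRoots.mpr ⟨hR.neg_mem α hα, by rw [inner_neg_left]; linarith⟩

structure IsSimpleSystem (R : Finset E) (x : E) (Δ : Finset E) : Prop where
  subset : Δ ⊆ positiveRoots R x
  subset_hull : (positiveRoots R x : Set E) ⊆ PointedCone.hull ℝ (Δ : Set E)
  card_le : ∀ Δ' ⊆ positiveRoots R x,
    (positiveRoots R x : Set E) ⊆ PointedCone.hull ℝ (Δ' : Set E) → Δ.card ≤ Δ'.card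

lemma exists_isSimpleSystem (R : Finset E) (x : E) : ∃ Δ, IsSimpleSystem R x Δ := by
  classical
  obtain ⟨Δ, hΔ, hmin⟩ := Finset.exists_min_image
    ((positiveRoots R x).powerset.filter
      fun Δ : Finset E => (positiveRoots R x : Set E) ⊆ PointedCone.hull ℝ (Δ : Set E))
    Finset.card ⟨positiveRoots R x, by simp⟩
  simp only [Finset.mem_filter, Finset.mem_powerset] at hΔ hmin
  exact ⟨Δ, hΔ.1, hΔ.2, fun Δ' h₁ h₂ => hmin Δ' ⟨h₁, h₂⟩⟩

namespace IsSimpleSystem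

variable {R : Finset E} {x : E} {Δ : Finset E}

lemma inner_pos (hΔ : IsSimpleSystem R x Δ) {d : E} (hd : d ∈ Δ) : 0 < ⟪d, x⟫ :=
  (mem_positiveRoots.mp (hΔ.subset hd)).2

lemma mem_of_mem (hΔ : IsSimpleSystem R x Δ) {d : E} (hd : d ∈ Δ) : d ∈ R :=
  (mem_positiveRoots.mp (hΔ.subset hd)).1

lemma notMem_hull_diff_singleton (hΔ : IsSimpleSystem R x Δ) {δ : E} (hδ : δ ∈ Δ) :
    δ ∉ PointedCone.hull ℝ ((Δ : Set E) \ {δ}) := by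
  classical
  intro h
  have hle : PointedCone.hull ℝ (Δ : Set E) ≤ PointedCone.hull ℝ (Δ.erase δ : Set E) := by
    rw [Finset.coe_erase]
    refine Submodule.span_le.mpr fun d hd => ?_
    by_cases hdδ : d = δ
    · exact hdδ ▸ h
    · exact PointedCone.subset_hull ⟨hd, hdδ⟩
  have := hΔ.card_le _ ((Finset.erase_subset δ Δ).trans hΔ.subset) (hΔ.subset_hull.trans hle)
  exact (Finset.card_erase_lt_of_mem hδ).not_ge this

lemma exists_inner_pos (hR : IsRootSystem R) (hΔ : IsSimpleSystem R x Δ) {α : E}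
    (hα : α ∈ positiveRoots R x) : ∃ d ∈ Δ, 0 < ⟪d, α⟫ := by
  by_contra! h
  have hα0 : 0 ≤ ⟪α, -α⟫ := inner_nonneg_of_mem_hull
    (fun d hd => by rw [inner_neg_right]; exact neg_nonneg.mpr (h d hd)) (hΔ.subset_hull hα)
  rw [inner_neg_right, neg_nonneg, real_inner_self_nonpos] at hα0
  exact hR.nonzero α (mem_positiveRoots.mp hα).1 hα0

lemma rootReflection_mem_positiveRoots (hR : IsRootSystem R) (hx : ∀ α ∈ R, ⟪α, x⟫ ≠ 0)
    (hΔ : IsSimpleSystem R x Δ) {δ β : E} (hδ : δ ∈ Δ) (hβ : β ∈ positiveRoots R x)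
    (hne : β ≠ δ) : rootReflection δ β ∈ positiveRoots R x := by
  obtain ⟨hβR, hβx⟩ := mem_positiveRoots.mp hβ
  have hσβ : rootReflection δ β ∈ R := hR.rootReflection_apply_mem (hΔ.mem_of_mem hδ) hβR
  refine mem_positiveRoots.mpr ⟨hσβ, ?_⟩
  by_contra! hσβx
  have hγ := hR.neg_mem_positiveRoots hσβ (hσβx.lt_of_ne (hx _ hσβ))
  have hsum : β + -rootReflection δ β = (2 * ⟪δ, β⟫ / ‖δ‖ ^ 2) • δ := by
    rw [rootReflection_apply]; abel
  have hΔδ : insert δ ((Δ : Set E) \ {δ}) = Δ := by simp [hδ]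
  obtain ⟨t, rfl⟩ := exists_eq_smul_of_add_eq_smul (fun d hd => hΔ.inner_pos hd.1)
    (hΔ.inner_pos hδ).le (hΔ.notMem_hull_diff_singleton hδ) (by rw [hΔδ]; exact hΔ.subset_hull hβ)
    (by rw [hΔδ]; exact hΔ.subset_hull hγ) hsum
  rcases hR.smul_mem δ (hΔ.mem_of_mem hδ) t hβR with rfl | rfl
  · exact hne (one_smul ℝ δ)
  · rw [neg_one_smul, inner_neg_left, neg_pos] at hβx
    exact hβx.not_gt (hΔ.inner_pos hδ)

lemma rootReflection_mem_closure (hR : IsRootSystem R) (hx : ∀ α ∈ R, ⟪α, x⟫ ≠ 0)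
    (hΔ : IsSimpleSystem R x Δ) {α : E} (hα : α ∈ positiveRoots R x) :
    rootReflection α ∈ Subgroup.closure (rootReflection '' (Δ : Set E)) := by
  classical
  set H := Subgroup.closure (rootReflection '' (Δ : Set E))
  by_contra hαH
  obtain ⟨α, hα, hmin⟩ := Finset.exists_min_image
    ((positiveRoots R x).filter fun α => rootReflection α ∉ H)
    (fun β => (⟪β, x⟫ : ℝ)) ⟨α, Finset.mem_filter.mpr ⟨hα, hαH⟩⟩
  obtain ⟨hα, hαH⟩ := Finset.mem_filter.mp hα
  obtain ⟨d, hd, hdα⟩ := hΔ.exists_inner_pos hR hα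
  have hdH : rootReflection d ∈ H := Subgroup.subset_closure ⟨d, hd, rfl⟩
  have hne : α ≠ d := by
    rintro rfl
    exact hαH hdH
  have hβH : rootReflection (rootReflection d α) ∈ H := by
    by_contra hβH
    exact (hmin _ (Finset.mem_filter.mpr
      ⟨hΔ.rootReflection_mem_positiveRoots hR hx hd hα hne, hβH⟩)).not_gt
      (inner_rootReflection_apply_lt hdα (hΔ.inner_pos hd))
  have hconj := rootReflection_map (rootReflection d) (rootReflection d α)
  rw [rootReflection_apply_rootReflection, rootReflection_inv] at hconj
  rw [hconj] at hαH
  exact hαH (mul_mem (mul_mem hdH hβH) hdH)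

lemma coxeterGroup_le_closure (hR : IsRootSystem R) (hx : ∀ α ∈ R, ⟪α, x⟫ ≠ 0)
    (hΔ : IsSimpleSystem R x Δ) :
    coxeterGroup R ≤ Subgroup.closure (rootReflection '' (Δ : Set E)) := by
  rw [coxeterGroup_eq_closure, Subgroup.closure_le]
  rintro _ ⟨α, hα, rfl⟩
  rcases (hx α hα).lt_or_gt with hαx | hαx
  · rw [← rootReflection_neg]
    exact hΔ.rootReflection_mem_closure hR hx (hR.neg_mem_positiveRoots hα hαx)
  · exact hΔ.rootReflection_mem_closure hR hx (mem_positiveRoots.mpr ⟨hα, hαx⟩)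

lemma exists_shorter_of_inner_neg (hR : IsRootSystem R) (hx : ∀ α ∈ R, ⟪α, x⟫ ≠ 0)
    (hΔ : IsSimpleSystem R x Δ) {l : List E} (hl : ∀ a ∈ l, a ∈ Δ) {δ : E} (hδ : δ ∈ Δ)
    (hlδ : ⟪(l.map rootReflection).prod δ, x⟫ < 0) :
    ∃ l' : List E, (∀ a ∈ l', a ∈ Δ) ∧ l'.length < l.length ∧
      (l.map rootReflection).prod * rootReflection δ = (l'.map rootReflection).prod := by
  induction l with
  | nil => exact absurd (hΔ.inner_pos hδ) (by simpa using hlδ.not_gt)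
  | cons a t ih =>
    have ha : a ∈ Δ := hl a List.mem_cons_self
    have ht : ∀ b ∈ t, b ∈ Δ := fun b hb => hl b (List.mem_cons_of_mem a hb)
    set w := (t.map rootReflection).prod with hw
    have hwδ : w δ ∈ R := hR.apply_mem_of_mem_coxeterGroup
      (list_prod_map_rootReflection_mem_coxeterGroup fun b hb => hΔ.mem_of_mem (ht b hb))
      (hΔ.mem_of_mem hδ)
    rcases (hx _ hwδ).lt_or_gt with hneg | hpos
    · obtain ⟨l', hl', hlen, heq⟩ := ih ht hneg
      refine ⟨a :: l', ?_, by simpa using hlen, by simp [← hw, mul_assoc, heq]⟩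
      rintro b (_ | ⟨_, hb⟩)
      exacts [ha, hl' b hb]
    · -- `σ_a` sends the positive root `w δ` to a negative one, so `w δ = a`.
      have hwa : w δ = a := by
        by_contra hne
        have := hΔ.rootReflection_mem_positiveRoots hR hx ha (mem_positiveRoots.mpr ⟨hwδ, hpos⟩) hne
        simp only [List.map_cons, List.prod_cons, ← hw, LinearIsometryEquiv.coe_mul,
          Function.comp_apply] at hlδ
        exact hlδ.not_gt (mem_positiveRoots.mp this).2
      refine ⟨t, ht, by simp, ?_⟩
      rw [List.map_cons, List.prod_cons, ← hw, ← hwa, rootReflection_map]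
      simp [mul_assoc]

lemma eq_one_of_apply_eq_self (hR : IsRootSystem R) (hx : ∀ α ∈ R, ⟪α, x⟫ ≠ 0)
    (hΔ : IsSimpleSystem R x Δ) {l : List E} (hl : ∀ a ∈ l, a ∈ Δ)
    (hfix : (l.map rootReflection).prod x = x) : (l.map rootReflection).prod = 1 := by
  induction hn : l.length using Nat.strong_induction_on generalizing l with
  | _ n ih =>
  rcases l.eq_nil_or_concat with rfl | ⟨l', δ, rfl⟩
  · rfl
  have hδ : δ ∈ Δ := hl δ (by simp)
  have hl' : ∀ a ∈ l', a ∈ Δ := fun a ha => hl a (by simp [ha])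
  set g := ((l'.concat δ).map rootReflection).prod
  have hg : g = (l'.map rootReflection).prod * rootReflection δ := by simp [g]
  have hgδ : ⟪g δ, x⟫ = ⟪δ, x⟫ := by
    conv_lhs => rw [← hfix]
    exact g.inner_map_map δ x
  have hneg : ⟪(l'.map rootReflection).prod δ, x⟫ < 0 := by
    rw [hg, LinearIsometryEquiv.coe_mul, Function.comp_apply, rootReflection_self, map_neg,
      inner_neg_left] at hgδ
    linarith [hΔ.inner_pos hδ]
  obtain ⟨l₂, hl₂, hlen, heq⟩ := hΔ.exists_shorter_of_inner_neg hR hx hl' hδ hneg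
  rw [hg, heq] at hfix ⊢
  exact ih _ (by simp at hn; omega) hl₂ hfix rfl

end IsSimpleSystem

theorem stabilizer_trivial_iff_mem_P_general
    (R : Finset E) (hR : IsRootSystem R) (x : E) :
    (∀ g ∈ coxeterGroup R, g x = x → g = 1) ↔ ∀ α ∈ R, (inner ℝ α x : ℝ) ≠ 0 := by
  refine ⟨fun h α hα hαx => ?_, fun hx g hg hgx => ?_⟩
  · exact rootReflection_ne_one (hR.nonzero α hα) (h _ (rootReflection_mem_coxeterGroup hα)
      (rootReflection_apply_of_inner_eq_zero hαx))
  · obtain ⟨Δ, hΔ⟩ := exists_isSimpleSystem R x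
    obtain ⟨l, hl, rfl⟩ :=
      exists_list_of_mem_closure_rootReflection (hΔ.coxeterGroup_le_closure hR hx hg)
    exact hΔ.eq_one_of_apply_eq_self hR hx hl hgx

/-- A point of `E` has trivial stabilizer in the Coxeter group `G(R)` if and only if it lies
in `P = E ∖ ⋃_{α∈R} H_α`, i.e. it is not orthogonal to any root. -/
theorem stabilizer_trivial_iff_mem_P [FiniteDimensional ℝ E]
    (R : Finset E) (hR : IsRootSystem R) (x : E) :
    (∀ g ∈ coxeterGroup R, g x = x → g = 1) ↔ ∀ α ∈ R, (inner ℝ α x : ℝ) ≠ 0 :=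
  stabilizer_trivial_iff_mem_P_general R hR x
end
end
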